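/- arXiv:1406.1001 — 3 statements merged into one kernel-verified Lean document; each statement's English description precedes it below -/
import Mathlib

section
/- Let p > 1, A ∈ ℝ^{m×n}, W_k ∈ ℝ^{n×k}, L ∈ ℝ^{l×n}, and b ∈ ℝ^m. Let B denote the set of minimizers over z ∈ ℝ^n of ‖(A W_k W_kᵀ) z − b‖₂. Then the problem min_{x ∈ B} ‖Lx‖_p has a unique minimizer if and only if N(A W_k W_kᵀ) ∩ N(L) = {0}, where N(·) denotes the null space. -/
/-! Least-squares solutions are minimizers of a strictly convex function of the residual, so they
all have the same image under `M = A W_k W_kᵀ`: the set `B` is the affine subspace `x₀ + N(M)`.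
On `B`, `x ↦ ∑ |(L x)ᵢ|^p` is a strictly convex and coercive function of `L x` (as `p > 1`), so it
attains its minimum, and two minimizers `x, y` have `L x = L y`; since also `M x = M y`, their
difference lies in `N(M) ∩ N(L)`. Conversely, adding a vector of `N(M) ∩ N(L)` to a minimizer
gives another one. -/

open Matrix Set Filter Topology

theorem strictConvexOn_norm_rpow {E : Type*} [NormedAddCommGroup E] [NormedSpace ℝ E]
    [StrictConvexSpace ℝ E] {p : ℝ} (hp : 1 < p) :
    StrictConvexOn ℝ univ fun x : E => ‖x‖ ^ p := by
  refine ⟨convex_univ, fun x _ y _ hxy a b ha hb hab => ?_⟩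
  simp only [smul_eq_mul]
  have hp0 : 0 ≤ p := by linarith
  by_cases hnorm : ‖x‖ = ‖y‖
  · have hlt : ‖a • x + b • y‖ < ‖x‖ := norm_combo_lt_of_ne le_rfl hnorm.ge hxy ha hb hab
    calc ‖a • x + b • y‖ ^ p < ‖x‖ ^ p := by gcongr
      _ = a * ‖x‖ ^ p + b * ‖y‖ ^ p := by rw [← hnorm, ← add_mul, hab, one_mul]
  · calc ‖a • x + b • y‖ ^ p ≤ (a * ‖x‖ + b * ‖y‖) ^ p := by
          gcongr
          refine (norm_add_le _ _).trans_eq ?_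
          rw [norm_smul, norm_smul, Real.norm_of_nonneg ha.le, Real.norm_of_nonneg hb.le]
      _ < a * ‖x‖ ^ p + b * ‖y‖ ^ p :=
          (strictConvexOn_rpow hp).2 (norm_nonneg x) (norm_nonneg y) hnorm ha hb hab

theorem strictConvexOn_univ_sum_apply {ι E : Type*} [Fintype ι] [AddCommGroup E] [Module ℝ E]
    {ψ : E → ℝ} (hψ : StrictConvexOn ℝ univ ψ) :
    StrictConvexOn ℝ univ fun u : ι → E => ∑ i, ψ (u i) := by
  refine ⟨convex_univ, fun x _ y _ hxy a b ha hb hab => ?_⟩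
  obtain ⟨j, hj⟩ := Function.ne_iff.1 hxy
  simp only [smul_eq_mul, Pi.add_apply, Pi.smul_apply, Finset.mul_sum, ← Finset.sum_add_distrib]
  refine Finset.sum_lt_sum (fun i _ => ?_) ⟨j, Finset.mem_univ j, ?_⟩
  · exact hψ.convexOn.2 (mem_univ _) (mem_univ _) ha.le hb.le hab
  · exact hψ.2 (mem_univ _) (mem_univ _) hj ha hb hab

theorem norm_rpow_le_sum_norm_rpow {ι E : Type*} [Fintype ι] [SeminormedAddCommGroup E]
    (u : ι → E) {p : ℝ} (hp : 0 < p) : ‖u‖ ^ p ≤ ∑ i, ‖u i‖ ^ p := by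
  have hsum : 0 ≤ ∑ i, ‖u i‖ ^ p := by positivity
  rw [← Real.le_rpow_inv_iff_of_pos (norm_nonneg u) hsum hp,
    pi_norm_le_iff_of_nonneg (by positivity)]
  intro i
  rw [Real.le_rpow_inv_iff_of_pos (norm_nonneg _) hsum hp]
  exact Finset.single_le_sum (f := fun i => ‖u i‖ ^ p) (fun i _ => by positivity)
    (Finset.mem_univ i)

theorem tendsto_sum_norm_rpow_cocompact {ι E : Type*} [Fintype ι] [NormedAddCommGroup E]
    [ProperSpace E] {p : ℝ} (hp : 0 < p) :
    Tendsto (fun u : ι → E => ∑ i, ‖u i‖ ^ p) (cocompact _) atTop :=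
  tendsto_atTop_mono (fun u => norm_rpow_le_sum_norm_rpow u hp)
    ((tendsto_rpow_atTop hp).comp tendsto_norm_cocompact_atTop)

theorem continuous_sum_norm_rpow {ι E : Type*} [Fintype ι] [SeminormedAddCommGroup E]
    {p : ℝ} (hp : 0 ≤ p) : Continuous fun u : ι → E => ∑ i, ‖u i‖ ^ p :=
  continuous_finsetSum _ fun i _ => (continuous_apply i).norm.rpow_const fun _ => Or.inr hp

section Minimization

variable {E F : Type*} [AddCommGroup E] [Module ℝ E] {φ : F → ℝ}

theorem exists_isMinOn_comp_affineMap [NormedAddCommGroup F] [NormedSpace ℝ F]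
    [FiniteDimensional ℝ F] (hφc : Continuous φ) (hφ : Tendsto φ (cocompact F) atTop)
    (f : E →ᵃ[ℝ] F) {S : AffineSubspace ℝ E} (hS : (S : Set E).Nonempty) :
    ∃ x ∈ S, IsMinOn (φ ∘ f) S x := by
  obtain ⟨x₀, hx₀⟩ := hS
  have hclosed : IsClosed (f '' S) := by
    rw [← AffineSubspace.coe_map]; exact (S.map f).closed_of_finiteDimensional
  obtain ⟨_, ⟨x, hxS, rfl⟩, hmin⟩ := hφc.continuousOn.exists_isMinOn' hclosed
    (mem_image_of_mem f hx₀) (eventually_inf_principal.2 <|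
      (hφ.eventually_ge_atTop (φ (f x₀))).mono fun _ h _ => h)
  exact ⟨x, hxS, fun y hy => hmin (mem_image_of_mem f hy)⟩

theorem StrictConvexOn.map_eq_of_isMinOn_comp [AddCommGroup F] [Module ℝ F]
    (hφ : StrictConvexOn ℝ univ φ) (f : E →ᵃ[ℝ] F)
    {S : Set E} (hS : Convex ℝ S) {x y : E} (hxm : IsMinOn (φ ∘ f) S x)
    (hym : IsMinOn (φ ∘ f) S y) (hx : x ∈ S) (hy : y ∈ S) : f x = f y := by
  have hmin {z} (hz : IsMinOn (φ ∘ f) S z) : IsMinOn φ (f '' S) (f z) := by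
    rintro _ ⟨w, hw, rfl⟩; exact hz hw
  exact (hφ.subset (subset_univ _) (hS.affine_image f)).eq_of_isMinOn (hmin hxm) (hmin hym)
    (mem_image_of_mem f hx) (mem_image_of_mem f hy)

theorem StrictConvexOn.isMinOn_comp_univ_iff [AddCommGroup F] [Module ℝ F]
    (hφ : StrictConvexOn ℝ univ φ) (f : E →ᵃ[ℝ] F)
    {x₀ x : E} (hx₀ : IsMinOn (φ ∘ f) univ x₀) : IsMinOn (φ ∘ f) univ x ↔ f x = f x₀ := by
  refine ⟨fun hx => hφ.map_eq_of_isMinOn_comp f convex_univ hx hx₀ (mem_univ x) (mem_univ x₀),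
    fun hfx y hy => ?_⟩
  simpa only [Function.comp_apply, hfx] using hx₀ hy

theorem existsUnique_isMinOn_comp_iff [NormedAddCommGroup F] [NormedSpace ℝ F]
    [FiniteDimensional ℝ F] (hφ : StrictConvexOn ℝ univ φ) (hφc : Continuous φ)
    (hφt : Tendsto φ (cocompact F) atTop) (f : E →ᵃ[ℝ] F) {S : AffineSubspace ℝ E}
    (hS : (S : Set E).Nonempty) :
    (∃! x, x ∈ S ∧ IsMinOn (φ ∘ f) S x) ↔ ∀ v ∈ S.direction, f.linear v = 0 → v = 0 := by
  constructor
  · rintro ⟨x, ⟨hxS, hxm⟩, huniq⟩ v hv hfv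
    have hfx : f (v +ᵥ x) = f x := by rw [f.map_vadd, hfv, zero_vadd]
    have hvx : v +ᵥ x ∈ S := S.vadd_mem_of_mem_direction hv hxS
    have := huniq (v +ᵥ x) ⟨hvx, fun y hy => by simpa only [Function.comp_apply, hfx] using hxm hy⟩
    simpa using this
  · intro hker
    obtain ⟨x, hxS, hxm⟩ := exists_isMinOn_comp_affineMap hφc hφt f hS
    refine ⟨x, ⟨hxS, hxm⟩, fun y ⟨hyS, hym⟩ => ?_⟩
    have hfxy := hφ.map_eq_of_isMinOn_comp f S.convex hym hxm hyS hxS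
    rw [← vsub_eq_zero_iff_eq]
    exact hker _ (S.vsub_mem_direction hyS hxS) (by rw [f.linearMap_vsub, hfxy, vsub_self])

end Minimization

namespace Matrix

variable {ι κ : Type*} [Fintype ι] [Fintype κ]

theorem exists_setOf_sqrt_sum_sq_le_eq_mk' (M : Matrix ι κ ℝ) (b : ι → ℝ) :
    ∃ x₀ : κ → ℝ, {x : κ → ℝ | ∀ z, √(∑ i, (M *ᵥ x - b) i ^ 2) ≤ √(∑ i, (M *ᵥ z - b) i ^ 2)} =
      (AffineSubspace.mk' x₀ (LinearMap.ker M.mulVecLin) : Set (κ → ℝ)) := by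
  let residual : (κ → ℝ) →ᵃ[ℝ] (ι → ℝ) := M.mulVecLin.toAffineMap - AffineMap.const ℝ _ b
  have hres (x) : residual x = M *ᵥ x - b := rfl
  let φ := fun u : ι → ℝ => ∑ i, ‖u i‖ ^ (2 : ℝ)
  obtain ⟨x₀, -, hx₀⟩ := exists_isMinOn_comp_affineMap (φ := φ)
    (continuous_sum_norm_rpow zero_le_two) (tendsto_sum_norm_rpow_cocompact zero_lt_two)
    residual (S := ⊤) ⟨0, trivial⟩
  rw [AffineSubspace.top_coe] at hx₀
  refine ⟨x₀, Set.ext fun x => ?_⟩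
  have hmin : (∀ z, √(∑ i, (M *ᵥ x - b) i ^ 2) ≤ √(∑ i, (M *ᵥ z - b) i ^ 2)) ↔
      IsMinOn (φ ∘ residual) univ x := by
    simp only [φ, isMinOn_univ_iff, Function.comp_apply, hres, Real.norm_eq_abs, Real.rpow_two,
      sq_abs]
    exact forall_congr' fun z => Real.sqrt_le_sqrt_iff (by positivity)
  rw [mem_ofPred_eq, hmin,
    (strictConvexOn_univ_sum_apply (strictConvexOn_norm_rpow one_lt_two)).isMinOn_comp_univ_iff
      residual hx₀,
    SetLike.mem_coe, AffineSubspace.mem_mk', hres, hres, LinearMap.mem_ker, mulVecLin_apply,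
    vsub_eq_sub, mulVec_sub, sub_eq_zero, sub_left_inj]

theorem existsUnique_lpNorm_mulVec_le_iff (L : Matrix ι κ ℝ) {p : ℝ} (hp : 1 < p)
    {S : AffineSubspace ℝ (κ → ℝ)} (hS : (S : Set (κ → ℝ)).Nonempty) :
    (∃! x, x ∈ S ∧ ∀ y ∈ S,
        (∑ i, |(L *ᵥ x) i| ^ p) ^ (1 / p) ≤ (∑ i, |(L *ᵥ y) i| ^ p) ^ (1 / p)) ↔
      ∀ v ∈ S.direction, L *ᵥ v = 0 → v = 0 := by
  let φ := fun u : ι → ℝ => ∑ i, ‖u i‖ ^ p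
  have hobj (x y : κ → ℝ) :
      (∑ i, |(L *ᵥ x) i| ^ p) ^ (1 / p) ≤ (∑ i, |(L *ᵥ y) i| ^ p) ^ (1 / p) ↔
        (φ ∘ L.mulVecLin.toAffineMap) x ≤ (φ ∘ L.mulVecLin.toAffineMap) y := by
    simp only [φ, Function.comp_apply, LinearMap.coe_toAffineMap, mulVecLin_apply,
      Real.norm_eq_abs]
    exact Real.rpow_le_rpow_iff (by positivity) (by positivity) (by positivity)
  have key := existsUnique_isMinOn_comp_iff (φ := φ)
    (strictConvexOn_univ_sum_apply (strictConvexOn_norm_rpow hp))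
    (continuous_sum_norm_rpow (by linarith)) (tendsto_sum_norm_rpow_cocompact (by linarith))
    L.mulVecLin.toAffineMap hS
  simp only [isMinOn_iff, ← hobj, LinearMap.toAffineMap_linear, mulVecLin_apply] at key
  exact key

end Matrix

/-- Theorem 2.2: the modified projection problem `min_{x ∈ B} ‖L x‖_p`, where `B` is
the set of minimizers of `‖(A W_k W_kᵀ) z - b‖₂`, has a unique minimizer if and only if
`N(A W_k W_kᵀ) ∩ N(L) = {0}`. -/
theorem stmt_4 (m n k l : ℕ) (p : ℝ) (hp : 1 < p)
    (A : Matrix (Fin m) (Fin n) ℝ) (Wk : Matrix (Fin n) (Fin k) ℝ)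
    (L : Matrix (Fin l) (Fin n) ℝ) (b : Fin m → ℝ)
    (B : Set (Fin n → ℝ))
    (hB : B = {x : Fin n → ℝ | ∀ z : Fin n → ℝ,
      Real.sqrt (∑ i, ((A * Wk * Wkᵀ).mulVec x - b) i ^ 2) ≤
        Real.sqrt (∑ i, ((A * Wk * Wkᵀ).mulVec z - b) i ^ 2)}) :
    (∃! x : Fin n → ℝ, x ∈ B ∧ ∀ y ∈ B,
        (∑ i, |(L.mulVec x) i| ^ p) ^ (1 / p) ≤ (∑ i, |(L.mulVec y) i| ^ p) ^ (1 / p)) ↔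
      (∀ x : Fin n → ℝ, (A * Wk * Wkᵀ).mulVec x = 0 → L.mulVec x = 0 → x = 0) := by
  obtain ⟨x₀, hB_eq⟩ := exists_setOf_sqrt_sum_sq_le_eq_mk' (A * Wk * Wkᵀ) b
  rw [hB, hB_eq]
  refine (L.existsUnique_lpNorm_mulVec_le_iff hp ⟨x₀, AffineSubspace.self_mem_mk' _ _⟩).trans ?_
  simp only [AffineSubspace.direction_mk', LinearMap.mem_ker, mulVecLin_apply]
end

section
/- Let p > 1, A ∈ ℝ^{m×n}, b ∈ ℝ^m, and L ∈ ℝ^{l×n} with null space N(L) = span{e}, where e is the all-ones vector. Let W_k ∈ ℝ^{n×k} have orthonormal columns whose first column is e/‖e‖₂, and let B be the set of minimizers over z of ‖(A W_k W_kᵀ) z − b‖₂. Then min_{x ∈ B} ‖Lx‖_p has a unique minimizer if and only if A e ≠ 0 (equivalently, e ∉ N(A)). -/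
/-!
Since the columns of `W_k` are orthonormal and the first one is a multiple of `e`, `W_k W_kᵀ` fixes
`e`, so `M := A W_k W_kᵀ` satisfies `M e = A e`. The Euclidean norm is strictly convex, so all
least-squares solutions have the same residual and `B` is a fibre `x₀ + N(M)`. The `p`-norm is
strictly convex as well: `‖L·‖_p` attains its minimum on `B` (the image `L(B)` is a closed affine
subspace of a finite-dimensional space), and any two minimizers have the same image under `L`, hence
differ by an element of `N(L) ∩ N(M) = span{e} ∩ N(M)`. This intersection is trivial exactly when
`M e = A e ≠ 0`; otherwise adding `e` to a minimizer gives another one.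
-/

open Matrix

open scoped ENNReal

theorem strictConvexOn_abs_rpow {p : ℝ} (hp : 1 < p) :
    StrictConvexOn ℝ Set.univ fun t : ℝ => |t| ^ p := by
  refine ⟨convex_univ, fun x _ y _ hxy a b ha hb hab => ?_⟩
  simp only [smul_eq_mul]
  rcases eq_or_ne |x| |y| with hxy' | hxy'
  · -- then `y = -x ≠ 0`, and the combination `(a - b) x` is strictly shorter than `x`
    obtain rfl : y = -x := (abs_eq_abs.1 hxy'.symm).resolve_left hxy.symm
    have hx : 0 < |x| := abs_pos.2 fun h => hxy (by simp [h])
    have hshort : |a * x + b * -x| < |x| := by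
      rw [show a * x + b * -x = (a - b) * x by ring, abs_mul]
      have : |a - b| < 1 := abs_sub_lt_iff.2 ⟨by linarith, by linarith⟩
      nlinarith
    calc |a * x + b * -x| ^ p < |x| ^ p := by gcongr
      _ = a * |x| ^ p + b * |-x| ^ p := by rw [abs_neg, ← add_mul, hab, one_mul]
  · calc |a * x + b * y| ^ p ≤ (a * |x| + b * |y|) ^ p := by
          gcongr
          calc |a * x + b * y| ≤ |a * x| + |b * y| := abs_add_le _ _
            _ = a * |x| + b * |y| := by rw [abs_mul, abs_mul, abs_of_pos ha, abs_of_pos hb]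
      _ < a * |x| ^ p + b * |y| ^ p :=
          (strictConvexOn_rpow hp).2 (abs_nonneg x) (abs_nonneg y) hxy' ha hb hab

theorem PiLp.strictConvexSpace_real {ι : Type*} [Fintype ι] {p : ℝ≥0∞} [Fact (1 ≤ p)]
    (hp : 1 < p.toReal) : StrictConvexSpace ℝ (PiLp p fun _ : ι => ℝ) := by
  refine StrictConvexSpace.of_norm_combo_lt_one fun x y hx hy hxy =>
    ⟨1 / 2, 1 / 2, by norm_num, ?_⟩
  have hp0 : 0 < p.toReal := by linarith
  obtain ⟨i, hi⟩ : ∃ i, x i ≠ y i := by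
    by_contra! h
    exact hxy (PiLp.ext h)
  have hconv := strictConvexOn_abs_rpow hp
  have hsum : ‖(1 / 2 : ℝ) • x + (1 / 2 : ℝ) • y‖ ^ p.toReal < 1 := by
    have key : ∀ z : PiLp p fun _ : ι => ℝ, ‖z‖ ^ p.toReal = ∑ j, |z j| ^ p.toReal := by
      intro z
      rw [PiLp.norm_eq_sum hp0, ← Real.rpow_mul (Finset.sum_nonneg fun _ _ => by positivity),
        one_div_mul_cancel hp0.ne', Real.rpow_one]
      rfl
    calc ‖(1 / 2 : ℝ) • x + (1 / 2 : ℝ) • y‖ ^ p.toReal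
        = ∑ j, |(1 / 2 : ℝ) • x j + (1 / 2 : ℝ) • y j| ^ p.toReal := key _
      _ < ∑ j, ((1 / 2 : ℝ) • |x j| ^ p.toReal + (1 / 2 : ℝ) • |y j| ^ p.toReal) :=
          Finset.sum_lt_sum
            (fun j _ => hconv.convexOn.2 trivial trivial one_half_pos.le one_half_pos.le
              (add_halves 1))
            ⟨i, Finset.mem_univ _, hconv.2 trivial trivial hi one_half_pos one_half_pos (add_halves 1)⟩
      _ = (1 / 2 : ℝ) * ‖x‖ ^ p.toReal + (1 / 2 : ℝ) * ‖y‖ ^ p.toReal := by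
          simp only [key, smul_eq_mul, Finset.sum_add_distrib, Finset.mul_sum]
      _ = 1 := by rw [hx, hy]; norm_num
  by_contra! h
  exact hsum.not_ge (Real.one_le_rpow h hp0.le)

section MinNorm

variable {V E F : Type*} [AddCommGroup V] [Module ℝ V] [NormedAddCommGroup E] [NormedSpace ℝ E]

theorem LinearMap.exists_forall_norm_sub_le [FiniteDimensional ℝ E] (T : V →ₗ[ℝ] E) (c : E) :
    ∃ x, ∀ z, ‖T x - c‖ ≤ ‖T z - c‖ := by
  have := FiniteDimensional.proper_real E
  obtain ⟨_, ⟨x, rfl⟩, hx⟩ :=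
    (LinearMap.range T).closed_of_finiteDimensional.exists_infDist_eq_dist
      ⟨0, (LinearMap.range T).zero_mem⟩ c
  refine ⟨x, fun z => ?_⟩
  rw [← dist_eq_norm, dist_comm, ← hx, ← dist_eq_norm']
  exact Metric.infDist_le_dist_of_mem (LinearMap.mem_range_self T z)

theorem LinearMap.eq_of_forall_norm_sub_le [StrictConvexSpace ℝ E] (T : V →ₗ[ℝ] E) (c : E)
    {C : Set V} (hC : Convex ℝ C) {x y : V} (hx : x ∈ C) (hy : y ∈ C)
    (hxmin : ∀ z ∈ C, ‖T x - c‖ ≤ ‖T z - c‖) (hymin : ∀ z ∈ C, ‖T y - c‖ ≤ ‖T z - c‖) :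
    T x = T y := by
  by_contra hne
  have hmid : T ((1 / 2 : ℝ) • x + (1 / 2 : ℝ) • y) - c
      = (1 / 2 : ℝ) • (T x - c) + (1 / 2 : ℝ) • (T y - c) := by
    simp only [map_add, map_smul, smul_sub]
    module
  have hlt := norm_combo_lt_of_ne le_rfl (hymin x hx) (sub_left_injective.ne hne)
    one_half_pos one_half_pos (add_halves 1)
  rw [← hmid] at hlt
  exact hlt.not_ge (hxmin _ (hC hx hy one_half_pos.le one_half_pos.le (add_halves 1)))

theorem LinearMap.exists_setOf_forall_norm_sub_le_eq_preimage [FiniteDimensional ℝ E]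
    [StrictConvexSpace ℝ E] (T : V →ₗ[ℝ] E) (c : E) :
    ∃ x₀, {x | ∀ z, ‖T x - c‖ ≤ ‖T z - c‖} = T ⁻¹' {T x₀} := by
  obtain ⟨x₀, hx₀⟩ := T.exists_forall_norm_sub_le c
  refine ⟨x₀, Set.ext fun x => ⟨fun hx => ?_, fun hx => ?_⟩⟩
  · exact T.eq_of_forall_norm_sub_le c convex_univ trivial trivial (fun z _ => hx z)
      fun z _ => hx₀ z
  · intro z
    rw [show T x = T x₀ from hx]
    exact hx₀ z

variable [NormedAddCommGroup F] [NormedSpace ℝ F]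

theorem existsUnique_forall_norm_le_on_preimage_iff [FiniteDimensional ℝ E]
    [StrictConvexSpace ℝ E]
    (L : V →ₗ[ℝ] E) (M : V →ₗ[ℝ] F) (x₀ : V) :
    (∃! x, x ∈ M ⁻¹' {M x₀} ∧ ∀ y ∈ M ⁻¹' {M x₀}, ‖L x‖ ≤ ‖L y‖) ↔
      Disjoint (LinearMap.ker L) (LinearMap.ker M) := by
  constructor
  · rintro ⟨x, ⟨hx, hmin⟩, huniq⟩
    refine Submodule.disjoint_def.2 fun v hvL hvM => ?_
    have : x + v = x := huniq _ ⟨by simp_all, by simpa [LinearMap.mem_ker.1 hvL] using hmin⟩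
    simpa using this
  · intro hdisj
    obtain ⟨v₀, hv₀⟩ := (L ∘ₗ (LinearMap.ker M).subtype).exists_forall_norm_sub_le (-L x₀)
    have hmin : ∀ y ∈ M ⁻¹' {M x₀}, ‖L (x₀ + v₀)‖ ≤ ‖L y‖ := by
      intro y hy
      have hyx₀ : y - x₀ ∈ LinearMap.ker M := by simp_all
      simpa [add_comm] using hv₀ ⟨y - x₀, hyx₀⟩
    refine ⟨x₀ + v₀, ⟨by simp, hmin⟩, fun y ⟨hy, hymin⟩ => ?_⟩
    have hC : Convex ℝ (M ⁻¹' {M x₀}) := (convex_singleton _).linear_preimage M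
    have hLy : L y = L (x₀ + v₀) :=
      L.eq_of_forall_norm_sub_le 0 hC hy (by simp) (by simpa using hymin) (by simpa using hmin)
    have hMy : M y = M (x₀ + v₀) := by simp_all
    rw [← sub_eq_zero]
    exact Submodule.disjoint_def.1 hdisj _ (by simp [hLy]) (by simp [hMy])

end MinNorm

namespace Matrix

variable {n k R : Type*} [Fintype n] [DecidableEq k]

theorem mul_transpose_mulVec_col [Fintype k] [CommSemiring R] {W : Matrix n k R}
    (hW : Wᵀ * W = 1) (j : k) :
    (W * Wᵀ) *ᵥ W.col j = W.col j := by
  rw [← mulVec_single_one, mulVec_mulVec, Matrix.mul_assoc, hW, Matrix.mul_one]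

theorem col_ne_zero_of_transpose_mul_self_eq_one [CommSemiring R] [Nontrivial R] {W : Matrix n k R}
    (hW : Wᵀ * W = 1) (j : k) : W.col j ≠ 0 := by
  intro h
  have hcol : ∀ i, W i j = 0 := fun i => congrFun h i
  simpa [mul_apply, hcol] using congrFun (congrFun hW j) j

theorem eq_smul_col_of_col_eq_div [Field R] {W : Matrix n k R} (hW : Wᵀ * W = 1) {j : k}
    {e : n → R} {s : R} (h : ∀ t, W t j = e t / s) : s ≠ 0 ∧ e = s • W.col j := by
  have hs : s ≠ 0 := by
    rintro rfl
    exact col_ne_zero_of_transpose_mul_self_eq_one hW j (funext fun t => by simpa using h t)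
  refine ⟨hs, funext fun t => ?_⟩
  simp [h, mul_div_cancel₀ _ hs]

theorem ne_zero_of_col_eq_div [Field R] {W : Matrix n k R} (hW : Wᵀ * W = 1) {j : k}
    {e : n → R} {s : R} (h : ∀ t, W t j = e t / s) : e ≠ 0 := by
  obtain ⟨hs, he⟩ := eq_smul_col_of_col_eq_div hW h
  exact he ▸ smul_ne_zero hs (col_ne_zero_of_transpose_mul_self_eq_one hW j)

theorem mul_transpose_mulVec_of_col_eq_div [Fintype k] [Field R] {W : Matrix n k R}
    (hW : Wᵀ * W = 1) {j : k} {e : n → R} {s : R} (h : ∀ t, W t j = e t / s) :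
    (W * Wᵀ) *ᵥ e = e := by
  obtain ⟨-, he⟩ := eq_smul_col_of_col_eq_div hW h
  rw [he, mulVec_smul, mul_transpose_mulVec_col hW]

end Matrix

theorem EuclideanSpace.norm_toLp_eq_sqrt {ι : Type*} [Fintype ι] (v : ι → ℝ) :
    ‖WithLp.toLp 2 v‖ = √(∑ i, v i ^ 2) := by
  simp [EuclideanSpace.norm_eq]

theorem PiLp.norm_toLp_ofReal_eq_sum {ι : Type*} [Fintype ι] {p : ℝ} (hp : 0 < p) (v : ι → ℝ) :
    ‖WithLp.toLp (ENNReal.ofReal p) v‖ = (∑ i, |v i| ^ p) ^ (1 / p) := by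
  rw [PiLp.norm_eq_sum (by rwa [ENNReal.toReal_ofReal hp.le]), ENNReal.toReal_ofReal hp.le]
  rfl

theorem stmt_9_general (m n k l : ℕ) (hk : 0 < k) (p : ℝ) (hp : 1 < p)
    (A : Matrix (Fin m) (Fin n) ℝ) (b : Fin m → ℝ)
    (L : Matrix (Fin l) (Fin n) ℝ)
    (e : Fin n → ℝ)
    (hL : {x : Fin n → ℝ | L.mulVec x = 0} = (Submodule.span ℝ {e} : Set (Fin n → ℝ)))
    (Wk : Matrix (Fin n) (Fin k) ℝ)
    (hWkOrtho : ∀ i j : Fin k, ∑ t, Wk t i * Wk t j = if i = j then (1 : ℝ) else 0)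
    (hWkFirst : ∀ t : Fin n, Wk t ⟨0, hk⟩ = e t / Real.sqrt (∑ s, e s ^ 2))
    (B : Set (Fin n → ℝ))
    (hB : B = {x : Fin n → ℝ | ∀ z : Fin n → ℝ,
      Real.sqrt (∑ i, ((A * Wk * Wkᵀ).mulVec x - b) i ^ 2) ≤
        Real.sqrt (∑ i, ((A * Wk * Wkᵀ).mulVec z - b) i ^ 2)}) :
    (∃! x : Fin n → ℝ, x ∈ B ∧ ∀ y ∈ B,
        (∑ i, |(L.mulVec x) i| ^ p) ^ (1 / p) ≤ (∑ i, |(L.mulVec y) i| ^ p) ^ (1 / p)) ↔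
      A.mulVec e ≠ 0 := by
  have hW : Wkᵀ * Wk = 1 := by
    ext i j
    simpa [mul_apply, one_apply] using hWkOrtho i j
  have hMe : (A * Wk * Wkᵀ) *ᵥ e = A *ᵥ e := by
    rw [Matrix.mul_assoc, ← mulVec_mulVec, mul_transpose_mulVec_of_col_eq_div hW hWkFirst]
  have : Fact (1 ≤ ENNReal.ofReal p) := ⟨ENNReal.one_le_ofReal.2 hp.le⟩
  have := PiLp.strictConvexSpace_real (ι := Fin l) (p := ENNReal.ofReal p)
    (by rwa [ENNReal.toReal_ofReal (by linarith)])
  let M := (WithLp.linearEquiv 2 ℝ (Fin m → ℝ)).symm.toLinearMap ∘ₗ (A * Wk * Wkᵀ).mulVecLin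
  let L' := (WithLp.linearEquiv (ENNReal.ofReal p) ℝ (Fin l → ℝ)).symm.toLinearMap ∘ₗ L.mulVecLin
  obtain ⟨x₀, hx₀⟩ := M.exists_setOf_forall_norm_sub_le_eq_preimage (WithLp.toLp 2 b)
  have hBM : B = M ⁻¹' {M x₀} := by
    have hnorm (x) : ‖M x - WithLp.toLp 2 b‖ = √(∑ i, ((A * Wk * Wkᵀ) *ᵥ x - b) i ^ 2) :=
      EuclideanSpace.norm_toLp_eq_sqrt _
    simp only [hB, ← hx₀, hnorm]
  have hkerL : LinearMap.ker L' = Submodule.span ℝ {e} := by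
    rw [LinearEquiv.ker_comp]
    exact SetLike.coe_injective hL
  have hkerM : LinearMap.ker M = LinearMap.ker (A * Wk * Wkᵀ).mulVecLin :=
    LinearEquiv.ker_comp _ _
  simp_rw [← PiLp.norm_toLp_ofReal_eq_sum (by linarith : 0 < p), hBM]
  refine (existsUnique_forall_norm_le_on_preimage_iff L' M x₀).trans ?_
  rw [hkerL, hkerM, disjoint_comm,
    Submodule.disjoint_span_singleton' (ne_zero_of_col_eq_div hW hWkFirst), LinearMap.mem_ker,
    mulVecLin_apply, hMe]

/-- Theorem 2.4: with a DCT-like signal subspace (orthonormal columns of `W_k` whose first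
column is the normalized all-ones vector `e/‖e‖₂`) and `N(L) = span{e}`, the modified
projection problem has a unique minimizer if and only if `A e ≠ 0`. -/
theorem stmt_9 (m n k l : ℕ) (hk : 0 < k) (p : ℝ) (hp : 1 < p)
    (A : Matrix (Fin m) (Fin n) ℝ) (b : Fin m → ℝ)
    (L : Matrix (Fin l) (Fin n) ℝ)
    (e : Fin n → ℝ) (he : e = fun _ => (1 : ℝ))
    (hL : {x : Fin n → ℝ | L.mulVec x = 0} = (Submodule.span ℝ {e} : Set (Fin n → ℝ)))
    (Wk : Matrix (Fin n) (Fin k) ℝ)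
    (hWkOrtho : ∀ i j : Fin k, ∑ t, Wk t i * Wk t j = if i = j then (1 : ℝ) else 0)
    (hWkFirst : ∀ t : Fin n, Wk t ⟨0, hk⟩ = e t / Real.sqrt (∑ s, e s ^ 2))
    (B : Set (Fin n → ℝ))
    (hB : B = {x : Fin n → ℝ | ∀ z : Fin n → ℝ,
      Real.sqrt (∑ i, ((A * Wk * Wkᵀ).mulVec x - b) i ^ 2) ≤
        Real.sqrt (∑ i, ((A * Wk * Wkᵀ).mulVec z - b) i ^ 2)}) :
    (∃! x : Fin n → ℝ, x ∈ B ∧ ∀ y ∈ B,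
        (∑ i, |(L.mulVec x) i| ^ p) ^ (1 / p) ≤ (∑ i, |(L.mulVec y) i| ^ p) ^ (1 / p)) ↔
      A.mulVec e ≠ 0 :=
  stmt_9_general m n k l hk p hp A b L e hL Wk hWkOrtho hWkFirst B hB
end

section
/- Let A ∈ ℝ^{m×n}, b ∈ ℝ^m, and let W = [W_k, W_0] ∈ ℝ^{n×n} be orthogonal, with W_k ∈ ℝ^{n×k} and W_0 ∈ ℝ^{n×(n−k)}. Suppose A W_k has full column rank, and let y_k ∈ ℝ^k be the unique minimizer of y ↦ ‖(A W_k) y − b‖₂. Then the set B of minimizers over z ∈ ℝ^n of ‖(A W_k W_kᵀ) z − b‖₂ equals {W_k y_k + W_0 y : y ∈ ℝ^{n−k}}. -/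
/-!
As `Wₖᵀ Wₖ = 1`, the objective is `z ↦ ‖(A Wₖ)(Wₖᵀ z) - b‖` and `Wₖᵀ` is onto, so `z` is a
minimizer exactly when `Wₖᵀ z` minimizes `y ↦ ‖(A Wₖ) y - b‖`. By the parallelogram law that
minimizer is unique once `A Wₖ` is injective, so the minimizers form the fibre `Wₖᵀ z = yₖ`, and
the decomposition `z = Wₖ Wₖᵀ z + W₀ W₀ᵀ z` identifies this fibre with `Wₖ yₖ + range W₀`.
-/

open Matrix Function

theorem Real.sqrt_sum_sq_eq_norm_toLp {ι : Type*} [Fintype ι] (v : ι → ℝ) :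
    √(∑ i, v i ^ 2) = ‖WithLp.toLp 2 v‖ := by
  simp [EuclideanSpace.norm_eq]

theorem LinearMap.eq_of_forall_norm_sub_le_s17 {E F : Type*} [AddCommGroup E] [Module ℝ E]
    [NormedAddCommGroup F] [InnerProductSpace ℝ F] {f : E →ₗ[ℝ] F} (hf : Injective f)
    (b : F) {x y : E} (hx : ∀ z, ‖f x - b‖ ≤ ‖f z - b‖) (hy : ‖f y - b‖ ≤ ‖f x - b‖) : x = y := by
  set u := f x - b
  set v := f y - b
  have hmid : ‖u‖ ≤ ‖u + v‖ / 2 := by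
    calc ‖u‖ ≤ ‖f ((2 : ℝ)⁻¹ • (x + y)) - b‖ := hx _
      _ = ‖(2 : ℝ)⁻¹ • (u + v)‖ := by
        congr 1; simp only [u, v, map_smul, map_add]; module
      _ = ‖u + v‖ / 2 := by rw [norm_smul]; norm_num; ring
  have hpar := parallelogram_law_with_norm ℝ u v
  have huv : ‖u - v‖ = 0 := by
    nlinarith [norm_nonneg u, norm_nonneg v, norm_nonneg (u - v)]
  apply hf
  rw [← sub_eq_zero, ← map_sub]
  simpa [u, v, norm_eq_zero, map_sub] using huv

theorem Matrix.eq_of_forall_sqrt_sum_sq_mulVec_sub_le {ι κ : Type*} [Fintype ι] [Fintype κ]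
    {M : Matrix ι κ ℝ} (hM : Injective M.mulVec) (b : ι → ℝ) {x y : κ → ℝ}
    (hx : ∀ z, √(∑ i, (M *ᵥ x - b) i ^ 2) ≤ √(∑ i, (M *ᵥ z - b) i ^ 2))
    (hy : √(∑ i, (M *ᵥ y - b) i ^ 2) ≤ √(∑ i, (M *ᵥ x - b) i ^ 2)) : x = y := by
  simp only [Real.sqrt_sum_sq_eq_norm_toLp, WithLp.toLp_sub] at hx hy
  exact LinearMap.eq_of_forall_norm_sub_le_s17
    (f := (WithLp.linearEquiv 2 ℝ (ι → ℝ)).symm.toLinearMap ∘ₗ M.mulVecLin)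
    ((WithLp.linearEquiv 2 ℝ (ι → ℝ)).symm.injective.comp hM) (WithLp.toLp 2 b) hx hy

theorem Matrix.card_le_card_of_transpose_mul_self_eq_one {ι κ R : Type*} [Fintype ι]
    [Fintype κ] [DecidableEq κ] [CommRing R] [Nontrivial R] {W : Matrix ι κ R} (hW : Wᵀ * W = 1) :
    Fintype.card κ ≤ Fintype.card ι := by
  simpa [hW] using (rank_mul_le_right Wᵀ W).trans W.rank_le_card_height

section OrthogonalBlocks

variable {ι κ ν R : Type*} [Fintype ι] [DecidableEq κ] [DecidableEq ν] [CommRing R]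
  {Wk : Matrix ι κ R} {W0 : Matrix ι ν R}

theorem Matrix.transpose_mul_self_eq_one_of_fromCols
    (hW : (fromCols Wk W0)ᵀ * fromCols Wk W0 = 1) : Wkᵀ * Wk = 1 := by
  simpa [transpose_fromCols, fromRows_mul_fromCols, ← fromBlocks_one] using
    congrArg toBlocks₁₁ hW

theorem Matrix.transpose_mul_eq_zero_of_fromCols
    (hW : (fromCols Wk W0)ᵀ * fromCols Wk W0 = 1) : Wkᵀ * W0 = 0 := by
  simpa [transpose_fromCols, fromRows_mul_fromCols, ← fromBlocks_one] using
    congrArg toBlocks₁₂ hW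

theorem Matrix.mul_transpose_add_mul_transpose_eq_one_of_fromCols [Fintype κ] [Fintype ν]
    [DecidableEq ι] [Nontrivial R] (hW : (fromCols Wk W0)ᵀ * fromCols Wk W0 = 1)
    (hcard : Fintype.card ι ≤ Fintype.card κ + Fintype.card ν) :
    Wk * Wkᵀ + W0 * W0ᵀ = 1 := by
  have hsq : Fintype.card ι = Fintype.card (κ ⊕ ν) :=
    le_antisymm (by simpa using hcard) (card_le_card_of_transpose_mul_self_eq_one hW)
  simpa [transpose_fromCols, fromCols_mul_fromRows] using
    (mul_eq_one_comm_of_equiv (Fintype.equivOfCardEq hsq)).mpr hW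

end OrthogonalBlocks

theorem Matrix.setOf_transpose_mulVec_eq {ι κ ν R : Type*} [Fintype ι] [Fintype κ]
    [Fintype ν] [DecidableEq ι] [DecidableEq κ] [CommRing R] {Wk : Matrix ι κ R} {W0 : Matrix ι ν R}
    (hkk : Wkᵀ * Wk = 1) (hk0 : Wkᵀ * W0 = 0) (hsum : Wk * Wkᵀ + W0 * W0ᵀ = 1) (y₀ : κ → R) :
    {z | Wkᵀ *ᵥ z = y₀} = {x | ∃ y, x = Wk *ᵥ y₀ + W0 *ᵥ y} := by
  ext z
  constructor
  · rintro rfl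
    refine ⟨W0ᵀ *ᵥ z, ?_⟩
    rw [mulVec_mulVec, mulVec_mulVec, ← add_mulVec, hsum, one_mulVec]
  · rintro ⟨y, rfl⟩
    simp [mulVec_add, mulVec_mulVec, hkk, hk0]

/-- If `W = [W_k, W_0]` is orthogonal, `A W_k` has full column rank, and `y_k` is the
(unique) minimizer of `‖(A W_k) y - b‖₂`, then the set of minimizers of
`‖(A W_k W_kᵀ) z - b‖₂` equals `{W_k y_k + W_0 y : y}`. -/
theorem stmt_17 (m n k : ℕ)
    (A : Matrix (Fin m) (Fin n) ℝ) (b : Fin m → ℝ)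
    (Wk : Matrix (Fin n) (Fin k) ℝ) (W0 : Matrix (Fin n) (Fin (n - k)) ℝ)
    (hW : (Matrix.fromCols Wk W0)ᵀ * Matrix.fromCols Wk W0 = 1)
    (hrank : Function.Injective (A * Wk).mulVec)
    (yk : Fin k → ℝ)
    (hyk : ∀ y : Fin k → ℝ,
      Real.sqrt (∑ i, ((A * Wk).mulVec yk - b) i ^ 2) ≤
        Real.sqrt (∑ i, ((A * Wk).mulVec y - b) i ^ 2)) :
    {z : Fin n → ℝ | ∀ w : Fin n → ℝ,
        Real.sqrt (∑ i, ((A * Wk * Wkᵀ).mulVec z - b) i ^ 2) ≤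
          Real.sqrt (∑ i, ((A * Wk * Wkᵀ).mulVec w - b) i ^ 2)} =
      {x : Fin n → ℝ | ∃ y : Fin (n - k) → ℝ, x = Wk.mulVec yk + W0.mulVec y} := by
  have hkk := transpose_mul_self_eq_one_of_fromCols hW
  have hsum := mul_transpose_add_mul_transpose_eq_one_of_fromCols hW (by simp; omega)
  rw [← setOf_transpose_mulVec_eq hkk (transpose_mul_eq_zero_of_fromCols hW) hsum yk]
  ext z
  simp only [Set.mem_ofPred_eq, ← mulVec_mulVec _ (A * Wk) Wkᵀ]
  constructor
  · intro hz
    have hz_min : ∀ y, √(∑ i, ((A * Wk) *ᵥ Wkᵀ *ᵥ z - b) i ^ 2) ≤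
        √(∑ i, ((A * Wk) *ᵥ y - b) i ^ 2) :=
      fun y => by simpa only [mulVec_mulVec y Wkᵀ Wk, hkk, one_mulVec] using hz (Wk *ᵥ y)
    exact (eq_of_forall_sqrt_sum_sq_mulVec_sub_le hrank b hyk (hz_min yk)).symm
  · intro hz w
    exact hz ▸ hyk _
end
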